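/- Let P and Q be finite nonempty posets, and assume P is connected, P is not a chain, and P is neither rooted nor co-rooted. Then the duality condition L(P,Q)^∨ = L(Q,P)^τ holds if and only if Q is a direct sum of chains. -/

import Mathlib

open MvPolynomial

/-- The ideal `L(P,Q)` generated by the monomials `u_φ = ∏_{p∈P} x_{p,φ(p)}`
over all isotone maps `φ : P → Q`. -/
noncomputable def isoL (P Q K : Type*) [PartialOrder P] [PartialOrder Q] [Fintype P]
    [Field K] : Ideal (MvPolynomial (P × Q) K) :=
  Ideal.span { u | ∃ φ : P →o Q, u = ∏ p : P, X (p, φ p) }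

/-- The Alexander dual `L(P,Q)^∨ = ⋂_{φ} (x_{p,φ(p)} : p ∈ P)`. -/
noncomputable def isoDual (P Q K : Type*) [PartialOrder P] [PartialOrder Q]
    [Field K] : Ideal (MvPolynomial (P × Q) K) :=
  ⨅ φ : P →o Q, Ideal.span { u | ∃ p : P, u = X (p, φ p) }

/-- The ideal `L(Q,P)^τ ⊆ K[x_{pq}]` generated by `∏_{q∈Q} x_{ψ(q),q}` for `ψ ∈ Hom(Q,P)`. -/
noncomputable def isoTau (P Q K : Type*) [PartialOrder P] [PartialOrder Q] [Fintype Q]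
    [Field K] : Ideal (MvPolynomial (P × Q) K) :=
  Ideal.span { u | ∃ ψ : Q →o P, u = ∏ q : Q, X (ψ q, q) }

/-- The prime ideal `𝔭_ψ = (x_{ψ(q),q} : q ∈ Q)`. -/
noncomputable def pPsi (P Q K : Type*) [PartialOrder P] [PartialOrder Q]
    [Field K] (ψ : Q →o P) : Ideal (MvPolynomial (P × Q) K) :=
  Ideal.span { u | ∃ q : Q, u = X (ψ q, q) }

/-- The height of an ideal: the infimum of the heights (in the prime spectrum)
of the prime ideals containing it. -/
noncomputable def idealHeight {R : Type*} [CommRing R] (I : Ideal R) : ℕ∞ :=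
  ⨅ J : {J : PrimeSpectrum R // I ≤ J.asIdeal}, Order.height J.1

/-- `P` is connected: any two elements are linked by a chain of comparabilities. -/
def PosetConnected (P : Type*) [PartialOrder P] : Prop :=
  ∀ a b : P, Relation.ReflTransGen (fun x y : P => x ≤ y ∨ y ≤ x) a b

/-- `P` is rooted: two incomparable elements have no common strict upper bound. -/
def Rooted (P : Type*) [PartialOrder P] : Prop :=
  ∀ p₁ p₂ p : P, ¬ p₁ ≤ p₂ → ¬ p₂ ≤ p₁ → ¬ (p₁ < p ∧ p₂ < p)

/-- `P` is co-rooted: two incomparable elements have no common strict lower bound. -/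
def CoRooted (P : Type*) [PartialOrder P] : Prop :=
  ∀ p₁ p₂ p : P, ¬ p₁ ≤ p₂ → ¬ p₂ ≤ p₁ → ¬ (p < p₁ ∧ p < p₂)

/-- `P` is a chain, i.e. totally ordered. -/
def IsChainPoset (P : Type*) [PartialOrder P] : Prop :=
  ∀ a b : P, a ≤ b ∨ b ≤ a

/-!
Both ideals are squarefree monomial ideals, so the duality condition says that a set
`S ⊆ P × Q` meets the graph of every isotone `φ : P → Q` iff it contains the transposed graph of
an isotone `ψ : Q → P`.

If `Q` is a direct sum of chains, a transposed graph meets every graph because `φ ∘ ψ` has a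
fixed point: `P` is connected, so the image of `φ` lies in one chain. Conversely, a set meeting
every graph contains a transposed graph over each chain of `Q`, built greedily from the bottom of
the chain; if this fails, the first places where it gets stuck form an isotone map avoiding `S`.

If `Q` has two incomparable elements with a common strict upper bound, matching them with two
incomparable elements of `P` having a common strict lower bound gives an explicit set meeting
every graph but containing no transposed graph; the other case is order dual.
-/

open Relation

section Comparability

variable {α : Type*} [PartialOrder α]

theorem Rooted.symmGen_trans (hr : Rooted α) (hc : CoRooted α) {a b c : α}
    (hab : SymmGen (· ≤ ·) a b) (hbc : SymmGen (· ≤ ·) b c) : SymmGen (· ≤ ·) a c := by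
  by_contra hac
  simp only [SymmGen, not_or] at hac
  rcases hab with hab | hba <;> rcases hbc with hbc | hcb
  · exact hac.1 (hab.trans hbc)
  · exact hr a c b hac.1 hac.2
      ⟨hab.lt_of_ne fun h => hac.2 (h ▸ hcb), hcb.lt_of_ne fun h => hac.1 (h ▸ hab)⟩
  · exact hc a c b hac.1 hac.2
      ⟨hba.lt_of_ne fun h => hac.1 (h ▸ hbc), hbc.lt_of_ne fun h => hac.2 (h ▸ hba)⟩
  · exact hac.2 (hcb.trans hba)

theorem Rooted.symmGen_of_reflTransGen (hr : Rooted α) (hc : CoRooted α) {a b : α}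
    (h : ReflTransGen (SymmGen (· ≤ ·)) a b) : SymmGen (· ≤ ·) a b := by
  induction h with
  | refl => exact SymmGen.rfl
  | tail _ hbc ih => exact hr.symmGen_trans hc ih hbc

def comparabilitySetoid (hr : Rooted α) (hc : CoRooted α) : Setoid α where
  r := SymmGen (· ≤ ·)
  iseqv := ⟨fun _ => SymmGen.rfl, SymmGen.symm, hr.symmGen_trans hc⟩

theorem rooted_orderDual_iff : Rooted αᵒᵈ ↔ CoRooted α :=
  ⟨fun h a b c hab hba => h a b c hba hab, fun h a b c hab hba => h a b c hba hab⟩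

theorem coRooted_orderDual_iff : CoRooted αᵒᵈ ↔ Rooted α :=
  ⟨fun h a b c hab hba => h a b c hba hab, fun h a b c hab hba => h a b c hba hab⟩

theorem Monotone.exists_isFixedPt_of_le_map [Finite α] {f : α → α} (hf : Monotone f) {x : α}
    (hx : x ≤ f x) : ∃ y, Function.IsFixedPt f y := by
  obtain ⟨m, n, hmn, heq⟩ := Finite.exists_ne_map_eq_of_infinite fun n => f^[n] x
  have hmono := hf.monotone_iterate_of_le_map hx
  wlog hlt : m < n generalizing m n
  · exact this n m hmn.symm heq.symm (hmn.lt_or_gt.resolve_left hlt)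
  have hsucc : f (f^[m] x) = f^[m + 1] x := (Function.iterate_succ_apply' f m x).symm
  refine ⟨f^[m] x, le_antisymm ?_ (hsucc ▸ hmono m.le_succ)⟩
  calc f (f^[m] x) = f^[m + 1] x := hsucc
    _ ≤ f^[n] x := hmono hlt
    _ = f^[m] x := heq.symm

theorem Monotone.exists_isFixedPt_of_symmGen [Finite α] {f : α → α} (hf : Monotone f) {x : α}
    (hx : SymmGen (· ≤ ·) x (f x)) : ∃ y, Function.IsFixedPt f y := by
  rcases hx with hx | hx
  · exact hf.exists_isFixedPt_of_le_map hx
  · exact hf.dual.exists_isFixedPt_of_le_map (α := αᵒᵈ) hx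

end Comparability

theorem OrderHom.exists_apply_apply_eq_self {P Q : Type*} [PartialOrder P] [PartialOrder Q]
    [Finite Q] [Nonempty Q] (hconn : PosetConnected P) (hr : Rooted Q) (hc : CoRooted Q)
    (φ : P →o Q) (ψ : Q →o P) : ∃ q, φ (ψ q) = q := by
  have hcomparable : ∀ a b : P, SymmGen (· ≤ ·) (φ a) (φ b) := fun a b =>
    hr.symmGen_of_reflTransGen hc <| (hconn a b).lift φ fun _ _ h => h.imp (φ.mono ·) (φ.mono ·)
  have hmono : Monotone (φ ∘ ψ) := φ.monotone.comp ψ.monotone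
  let q₀ := Classical.arbitrary Q
  obtain ⟨q, hq⟩ := hmono.exists_isFixedPt_of_symmGen (hcomparable (ψ q₀) (ψ (φ (ψ q₀))))
  exact ⟨q, hq⟩

section Graphs

variable {P Q : Type*} [PartialOrder P] [PartialOrder Q]

def IsGraphCover (S : Set (P × Q)) : Prop :=
  ∀ φ : P →o Q, ∃ p, (p, φ p) ∈ S

def HasTransposedGraph (S : Set (P × Q)) : Prop :=
  ∃ ψ : Q →o P, ∀ q, (ψ q, q) ∈ S

theorem isGraphCover_orderDual_iff {S : Set (P × Q)} :
    IsGraphCover (P := Pᵒᵈ) (Q := Qᵒᵈ) S ↔ IsGraphCover S :=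
  ⟨fun h φ => h (OrderHom.dual φ), fun h φ => h (OrderHom.dual.symm φ)⟩

theorem hasTransposedGraph_orderDual_iff {S : Set (P × Q)} :
    HasTransposedGraph (P := Pᵒᵈ) (Q := Qᵒᵈ) S ↔ HasTransposedGraph S :=
  ⟨fun ⟨ψ, hψ⟩ => ⟨OrderHom.dual.symm ψ, hψ⟩, fun ⟨ψ, hψ⟩ => ⟨OrderHom.dual ψ, hψ⟩⟩

end Graphs

section MonomialIdeals

variable {P Q K : Type*} [PartialOrder P] [PartialOrder Q] [Field K]

theorem mem_isoDual_iff {f : MvPolynomial (P × Q) K} :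
    f ∈ isoDual P Q K ↔ ∀ m ∈ f.support, IsGraphCover {i | m i ≠ 0} := by
  have hspan (φ : P →o Q) : { u : MvPolynomial (P × Q) K | ∃ p, u = X (p, φ p) } =
      X '' Set.range fun p => (p, φ p) := by
    ext; simp [eq_comm]
  simp only [isoDual, Submodule.mem_iInf, hspan, mem_ideal_span_X_image, IsGraphCover,
    Set.exists_range_iff, Set.mem_ofPred_eq]
  exact ⟨fun h m hm φ => h φ m hm, fun h φ m hm => h m hm φ⟩

theorem sum_single_one_le_iff {ι σ : Type*} [Fintype ι] {g : ι → σ} (hg : Function.Injective g)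
    {m : σ →₀ ℕ} : ∑ i, Finsupp.single (g i) 1 ≤ m ↔ ∀ i, m (g i) ≠ 0 := by
  classical
  have happly (s : σ) : (∑ i, Finsupp.single (g i) 1) s = if s ∈ Set.range g then 1 else 0 := by
    split_ifs with hs
    · obtain ⟨j, rfl⟩ := hs
      simp [Finsupp.finsetSum_apply, Finsupp.single_apply, hg.eq_iff]
    · simp_all [Finsupp.finsetSum_apply]
  simp only [Finsupp.le_def, happly]
  constructor
  · intro h i
    simpa [Nat.one_le_iff_ne_zero] using h (g i)
  · intro h s
    split_ifs with hs
    · obtain ⟨i, rfl⟩ := hs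
      exact Nat.one_le_iff_ne_zero.mpr (h i)
    · exact Nat.zero_le _

theorem mem_isoTau_iff [Fintype Q] {f : MvPolynomial (P × Q) K} :
    f ∈ isoTau P Q K ↔ ∀ m ∈ f.support, HasTransposedGraph {i | m i ≠ 0} := by
  have hspan : { u : MvPolynomial (P × Q) K | ∃ ψ : Q →o P, u = ∏ q, X (ψ q, q) } =
      (fun d => monomial d 1) '' Set.range fun ψ : Q →o P => ∑ q, Finsupp.single (ψ q, q) 1 := by
    ext
    simp [monomial_sum_one, X, eq_comm]
  simp only [isoTau, hspan, mem_ideal_span_monomial_image, HasTransposedGraph,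
    Set.exists_range_iff, Set.mem_ofPred_eq]
  exact forall₂_congr fun m _ => exists_congr fun ψ =>
    sum_single_one_le_iff fun _ _ h => congrArg Prod.snd h

theorem isoDual_eq_isoTau_iff [Finite P] [Fintype Q] :
    isoDual P Q K = isoTau P Q K ↔ ∀ S : Set (P × Q), IsGraphCover S ↔ HasTransposedGraph S := by
  refine ⟨fun h S => ?_, fun h => ?_⟩
  · classical
    let d : P × Q →₀ ℕ := Finsupp.equivFunOnFinite.symm (S.indicator 1)
    have hd : {i | d i ≠ 0} = S := by ext; simp [d]
    have hmem : monomial d (1 : K) ∈ isoDual P Q K ↔ monomial d (1 : K) ∈ isoTau P Q K := by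
      rw [h]
    simpa [mem_isoDual_iff, mem_isoTau_iff, support_monomial, hd] using hmem
  · ext f
    rw [mem_isoDual_iff, mem_isoTau_iff]
    exact forall₂_congr fun m _ => h _

end MonomialIdeals

section Obstruction

variable {P Q : Type*} [PartialOrder P] [PartialOrder Q]

theorem exists_isGraphCover_not_hasTransposedGraph_of_not_rooted (hQ : ¬ Rooted Q)
    (hP : ¬ CoRooted P) : ∃ S : Set (P × Q), IsGraphCover S ∧ ¬ HasTransposedGraph S := by
  simp only [Rooted, CoRooted, not_forall, not_not] at hQ hP
  obtain ⟨q₁, q₂, q₃, hq₁₂, hq₂₁, hq₁₃, hq₂₃⟩ := hQ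
  obtain ⟨s₁, s₂, s₃, hs₁₂, hs₂₁, hs₃₁, hs₃₂⟩ := hP
  -- An isotone map missing `S` would send `s₁ ↦ q₂` and `s₂ ↦ q₁`, leaving no value for `s₃`.
  refine ⟨{i | (i.2 = q₁ → i.1 = s₁) ∧ (i.2 = q₂ → i.1 = s₂) ∧
    (i.2 = q₃ → ¬ (s₁ ≤ i.1 ∧ s₂ ≤ i.1))}, fun φ => ?_, fun ⟨ψ, hψ⟩ => ?_⟩
  · by_contra! hφ
    have hφ' (p : P) : φ p = q₁ ∧ p ≠ s₁ ∨ φ p = q₂ ∧ p ≠ s₂ ∨ φ p = q₃ ∧ s₁ ≤ p ∧ s₂ ≤ p := by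
      have := hφ p
      simp only [Set.mem_ofPred_eq] at this
      tauto
    have h₁ : φ s₁ = q₂ := by
      rcases hφ' s₁ with ⟨-, h⟩ | ⟨h, -⟩ | ⟨-, -, h⟩
      exacts [absurd rfl h, h, absurd h hs₂₁]
    have h₂ : φ s₂ = q₁ := by
      rcases hφ' s₂ with ⟨h, -⟩ | ⟨-, h⟩ | ⟨-, h, -⟩
      exacts [h, absurd rfl h, absurd h hs₁₂]
    have hle₂ : φ s₃ ≤ q₂ := h₁ ▸ φ.monotone hs₃₁.le
    have hle₁ : φ s₃ ≤ q₁ := h₂ ▸ φ.monotone hs₃₂.le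
    rcases hφ' s₃ with ⟨h, -⟩ | ⟨h, -⟩ | ⟨h, -⟩
    · exact hq₁₂ (h ▸ hle₂)
    · exact hq₂₁ (h ▸ hle₁)
    · exact (h ▸ hle₂).not_gt hq₂₃
  · have h₁ : ψ q₁ = s₁ := (hψ q₁).1 rfl
    have h₂ : ψ q₂ = s₂ := (hψ q₂).2.1 rfl
    exact (hψ q₃).2.2 rfl ⟨h₁ ▸ ψ.monotone hq₁₃.le, h₂ ▸ ψ.monotone hq₂₃.le⟩

theorem exists_isGraphCover_not_hasTransposedGraph_of_not_coRooted (hQ : ¬ CoRooted Q)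
    (hP : ¬ Rooted P) : ∃ S : Set (P × Q), IsGraphCover S ∧ ¬ HasTransposedGraph S := by
  obtain ⟨S, hS, hS'⟩ := exists_isGraphCover_not_hasTransposedGraph_of_not_rooted
    (P := Pᵒᵈ) (Q := Qᵒᵈ) (rooted_orderDual_iff.not.mpr hQ) (coRooted_orderDual_iff.not.mpr hP)
  exact ⟨S, isGraphCover_orderDual_iff.mp hS, mt hasTransposedGraph_orderDual_iff.mpr hS'⟩

end Obstruction

section Chains

variable {P C : Type*} [PartialOrder P] [LinearOrder C] {S : Set (P × C)}

def SectionBoundedBy (S : Set (P × C)) (c : C) (p : P) : Prop :=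
  ∃ f : C → P, MonotoneOn f (Set.Iic c) ∧ (∀ x ≤ c, (f x, x) ∈ S) ∧ f c ≤ p

theorem SectionBoundedBy.mono {c : C} {p p' : P} (h : SectionBoundedBy S c p) (hp : p ≤ p') :
    SectionBoundedBy S c p' :=
  let ⟨f, hf, hfS, hfc⟩ := h
  ⟨f, hf, hfS, hfc.trans hp⟩

theorem sectionBoundedBy_of_mem [Finite C] {c : C} {p : P} (hpc : (p, c) ∈ S)
    (hlt : ∀ d < c, SectionBoundedBy S d p) : SectionBoundedBy S c p := by
  rcases (Set.Iio c).eq_empty_or_nonempty with hmin | hne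
  · refine ⟨fun _ => p, fun _ _ _ _ _ => le_rfl, fun x hx => ?_, le_rfl⟩
    obtain rfl : x = c := hx.eq_of_not_lt fun h => hmin.subset h
    exact hpc
  obtain ⟨d, hdc, hd⟩ := (Set.Iio c).exists_max_image id (Set.toFinite _) hne
  obtain ⟨f, hf, hfS, hfd⟩ := hlt d hdc
  have hle {x : C} (hx : x < c) : x ≤ d := hd x hx
  refine ⟨Function.update f c p, fun x hx y hy hxy => ?_, fun x hx => ?_, by simp⟩
  · simp only [Set.mem_Iic] at hy
    rcases hy.lt_or_eq with hyc | rfl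
    · have hxc := hxy.trans_lt hyc
      rw [Function.update_of_ne hxc.ne, Function.update_of_ne hyc.ne]
      exact hf (hle hxc) (hle hyc) hxy
    · rcases hxy.lt_or_eq with hxc | rfl
      · rw [Function.update_of_ne hxc.ne, Function.update_self]
        exact (hf (hle hxc) le_rfl (hle hxc)).trans hfd
      · exact le_rfl
  · rcases hx.lt_or_eq with hxc | rfl
    · rw [Function.update_of_ne hxc.ne]
      exact hfS x (hle hxc)
    · simpa using hpc

theorem hasTransposedGraph_of_isGraphCover_of_linearOrder [Finite C] (hS : IsGraphCover S) :
    HasTransposedGraph S := by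
  rcases isEmpty_or_nonempty C with hC | hC
  · exact ⟨⟨isEmptyElim, fun x => isEmptyElim x⟩, isEmptyElim⟩
  obtain ⟨t, ht⟩ := Finite.exists_max (id : C → C)
  by_contra hno
  have hunbounded (p : P) : ¬ SectionBoundedBy S t p := fun ⟨f, hf, hfS, _⟩ =>
    hno ⟨⟨f, fun x y hxy => hf (ht x) (ht y) hxy⟩, fun x => hfS x (ht x)⟩
  -- `φ p` is the first `c` beyond which no section of `S` stays below `p`: an isotone map
  -- whose graph misses `S`.
  choose φ hφ hφmin using fun p =>
    {c | ¬ SectionBoundedBy S c p}.exists_min_image id (Set.toFinite _) ⟨t, hunbounded p⟩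
  have hφmono : Monotone φ := fun p p' hpp' => hφmin p (φ p') fun h => hφ p' (h.mono hpp')
  obtain ⟨p, hp⟩ := hS ⟨φ, hφmono⟩
  exact hφ p <| sectionBoundedBy_of_mem hp fun d hd =>
    by_contra fun h => (hφmin p d h).not_gt hd

end Chains

theorem hasTransposedGraph_of_isGraphCover {P Q : Type*} [PartialOrder P] [PartialOrder Q]
    [Finite Q] (hr : Rooted Q) (hc : CoRooted Q) {S : Set (P × Q)} (hS : IsGraphCover S) :
    HasTransposedGraph S := by
  classical
  let s := comparabilitySetoid hr hc
  have hchain (c : Quotient s) :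
      ∃ ψ : {x // Quotient.mk s x = c} →o P, ∀ x, (ψ x, x.1) ∈ S := by
    let _ : LinearOrder {x // Quotient.mk s x = c} :=
      linearOrderOfSymmGen fun x y => Quotient.exact (x.2.trans y.2.symm)
    exact hasTransposedGraph_of_isGraphCover_of_linearOrder
      (S := {i : P × {x // Quotient.mk s x = c} | (i.1, i.2.1) ∈ S})
      fun φ => hS ((OrderHom.Subtype.val _).comp φ)
  choose ψ hψ using hchain
  have hψmono {c c' : Quotient s} (e : c = c') {q q' : Q} (hq : Quotient.mk s q = c)
      (hq' : Quotient.mk s q' = c') (h : q ≤ q') : ψ c ⟨q, hq⟩ ≤ ψ c' ⟨q', hq'⟩ := by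
    subst e
    exact (ψ c).monotone h
  exact ⟨⟨fun q => ψ _ ⟨q, rfl⟩, fun q q' h => hψmono (Quotient.sound (.of_le h)) rfl rfl h⟩,
    fun q => hψ _ _⟩

theorem isGraphCover_of_hasTransposedGraph {P Q : Type*} [PartialOrder P] [PartialOrder Q]
    [Finite Q] [Nonempty Q] (hconn : PosetConnected P) (hr : Rooted Q) (hc : CoRooted Q)
    {S : Set (P × Q)} (hS : HasTransposedGraph S) : IsGraphCover S := by
  obtain ⟨ψ, hψ⟩ := hS
  intro φ
  obtain ⟨q, hq⟩ := φ.exists_apply_apply_eq_self hconn hr hc ψ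
  exact ⟨ψ q, by rw [hq]; exact hψ q⟩

theorem stmt_7_general (P Q K : Type*) [PartialOrder P] [PartialOrder Q]
    [Fintype P] [Fintype Q] [Nonempty Q] [Field K]
    (hconn : PosetConnected P)
    (hroot : ¬ Rooted P) (hcoroot : ¬ CoRooted P) :
    isoDual P Q K = isoTau P Q K ↔ (Rooted Q ∧ CoRooted Q) := by
  rw [isoDual_eq_isoTau_iff]
  refine ⟨fun h => ⟨?_, ?_⟩, fun ⟨hr, hc⟩ S =>
    ⟨hasTransposedGraph_of_isGraphCover hr hc, isGraphCover_of_hasTransposedGraph hconn hr hc⟩⟩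
  · by_contra hQ
    obtain ⟨S, hS, hS'⟩ := exists_isGraphCover_not_hasTransposedGraph_of_not_rooted hQ hcoroot
    exact hS' ((h S).mp hS)
  · by_contra hQ
    obtain ⟨S, hS, hS'⟩ := exists_isGraphCover_not_hasTransposedGraph_of_not_coRooted hQ hroot
    exact hS' ((h S).mp hS)

/-- If `P` is connected, not a chain, and neither rooted nor co-rooted,
then `L(P,Q)^∨ = L(Q,P)^τ` iff `Q` is a direct sum of chains (i.e. rooted and co-rooted). -/
theorem stmt_7 (P Q K : Type*) [PartialOrder P] [PartialOrder Q]
    [Fintype P] [Fintype Q] [Nonempty P] [Nonempty Q] [Field K]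
    (hconn : PosetConnected P) (hchain : ¬ IsChainPoset P)
    (hroot : ¬ Rooted P) (hcoroot : ¬ CoRooted P) :
    isoDual P Q K = isoTau P Q K ↔ (Rooted Q ∧ CoRooted Q) :=
  stmt_7_general P Q K hconn hroot hcoroot
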